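/- arXiv:2605.15308 — 3 statements merged into one kernel-verified Lean document; each statement's English description precedes it below -/
import Mathlib

section
/- Let X be a countable set, p0 a probability mass function on X, R : X → ℝ bounded on the support of p0, and β > 0. Then the probability mass function p*(x) = p0(x) · exp(β R(x)) / Z, where Z = Σ_x p0(x) exp(β R(x)), is the unique maximizer over all probability mass functions p absolutely continuous with respect to p0 of the objective E_{x∼p}[R(x)] − (1/β) · D_KL(p ‖ p0). -/
open Real

/-- A probability mass function on a countable type, modelled as a nonnegative
summable real-valued function with total mass one. -/
def IsPMF {X : Type*} (p : X → ℝ) : Prop :=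
  (∀ x, 0 ≤ p x) ∧ Summable p ∧ ∑' x, p x = 1

/-- Absolute continuity of pmfs: `p x > 0` implies `p0 x > 0`. -/
def AbsCont {X : Type*} (p p0 : X → ℝ) : Prop :=
  ∀ x, 0 < p x → 0 < p0 x

/-- The KL-regularized objective `E_{x∼p}[R] − (1/β) D_KL(p ‖ p0)`,
with the convention `0 log 0 = 0` (automatic since `0 * log (0 / p0 x) = 0`). -/
noncomputable def klObjective {X : Type*} (p p0 : X → ℝ) (R : X → ℝ) (β : ℝ) : ℝ :=
  (∑' x, p x * R x) - (1 / β) * ∑' x, p x * Real.log (p x / p0 x)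

/-- **Reward-tilted target distribution.** The pmf
`p*(x) = p0 x · exp (β R x) / Z`, where `Z = ∑ₓ p0 x exp (β R x)`, is the unique
maximizer of `E_p[R] − (1/β) D_KL(p‖p0)` over pmfs absolutely continuous w.r.t. `p0`
(among those for which the objective is well defined, i.e. the two sums are summable). -/
theorem reward_tilted_unique_maximizer
    {X : Type*} [Countable X] (p0 : X → ℝ) (R : X → ℝ) (β : ℝ) (hβ : 0 < β)
    (hp0 : IsPMF p0)
    (B : ℝ) (hR : ∀ x, 0 < p0 x → |R x| ≤ B)
    (hZsum : Summable (fun x => p0 x * Real.exp (β * R x))) :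
    let Z : ℝ := ∑' x, p0 x * Real.exp (β * R x)
    let pstar : X → ℝ := fun x => p0 x * Real.exp (β * R x) / Z
    IsPMF pstar ∧ AbsCont pstar p0 ∧
    (∀ p : X → ℝ, IsPMF p → AbsCont p p0 →
      Summable (fun x => p x * R x) →
      Summable (fun x => p x * Real.log (p x / p0 x)) →
      klObjective p p0 R β ≤ klObjective pstar p0 R β) ∧
    (∀ p : X → ℝ, IsPMF p → AbsCont p p0 →
      Summable (fun x => p x * R x) →
      Summable (fun x => p x * Real.log (p x / p0 x)) →
      klObjective p p0 R β = klObjective pstar p0 R β → p = pstar) := by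
  intro Z pstar
  obtain ⟨hp0nn, hp0sum, hp0tot⟩ := hp0
  -- Z is positive
  have hterm_nn : ∀ x, 0 ≤ p0 x * Real.exp (β * R x) :=
    fun x => mul_nonneg (hp0nn x) (Real.exp_pos _).le
  have hx0 : ∃ x, 0 < p0 x := by
    by_contra h
    push_neg at h
    have hz : ∀ x, p0 x = 0 := fun x => le_antisymm (h x) (hp0nn x)
    simp [tsum_congr hz] at hp0tot
  obtain ⟨x0, hx0⟩ := hx0
  have hZpos : 0 < Z := by
    have h1 : p0 x0 * Real.exp (β * R x0) ≤ Z :=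
      Summable.le_tsum hZsum x0 (fun j _ => hterm_nn j)
    exact lt_of_lt_of_le (mul_pos hx0 (Real.exp_pos _)) h1
  have hps_nn : ∀ x, 0 ≤ pstar x := fun x => div_nonneg (hterm_nn x) hZpos.le
  have hps_sum : Summable pstar := hZsum.div_const Z
  have hps_tot : ∑' x, pstar x = 1 := by
    simp only [pstar]
    rw [tsum_div_const]
    exact div_self hZpos.ne'
  have hps_pos : ∀ x, 0 < p0 x → 0 < pstar x :=
    fun x h => div_pos (mul_pos h (Real.exp_pos _)) hZpos
  have hps_zero : ∀ x, p0 x = 0 → pstar x = 0 := by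
    intro x h; simp only [pstar, h, zero_mul, zero_div]
  have habs_star : AbsCont pstar p0 := by
    intro x hx
    rcases lt_or_eq_of_le (hp0nn x) with h | h
    · exact h
    · exact absurd (hps_zero x h.symm) (ne_of_gt hx)
  have hlogps : ∀ x, 0 < p0 x → Real.log (pstar x) = Real.log (p0 x) + β * R x - Real.log Z := by
    intro x hx
    simp only [pstar]
    rw [Real.log_div (mul_pos hx (Real.exp_pos _)).ne' hZpos.ne',
      Real.log_mul hx.ne' (Real.exp_pos _).ne', Real.log_exp]
  -- Main computation, uniform in p
  have hmain : ∀ p : X → ℝ, IsPMF p → AbsCont p p0 →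
      Summable (fun x => p x * R x) →
      Summable (fun x => p x * Real.log (p x / p0 x)) →
      (Summable (fun x => p x * Real.log (p x / pstar x)) ∧
       klObjective p p0 R β
         = Real.log Z / β - (1 / β) * ∑' x, p x * Real.log (p x / pstar x) ∧
       0 ≤ ∑' x, p x * Real.log (p x / pstar x) ∧
       ((∑' x, p x * Real.log (p x / pstar x)) = 0 → p = pstar)) := by
    intro p hp habs hsum1 hsum2
    obtain ⟨hpnn, hpsum, hptot⟩ := hp
    set f : X → ℝ := fun x => p x * Real.log (p x / pstar x) with hf_def
    have hf_eq : ∀ x, f x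
        = p x * Real.log (p x / p0 x) - β * (p x * R x) + Real.log Z * p x := by
      intro x
      rcases lt_or_eq_of_le (hpnn x) with hx | hx
      · have hp0x : 0 < p0 x := habs x hx
        have hpsx : 0 < pstar x := hps_pos x hp0x
        simp only [hf_def]
        rw [Real.log_div hx.ne' hpsx.ne', Real.log_div hx.ne' hp0x.ne',
          hlogps x hp0x]
        ring
      · simp [hf_def, ← hx]
    have hf_sum : Summable f := by
      refine Summable.congr ?_ (fun x => (hf_eq x).symm)
      exact (hsum2.sub (hsum1.mul_left β)).add (hpsum.mul_left (Real.log Z))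
    have hf_tsum : ∑' x, f x
        = (∑' x, p x * Real.log (p x / p0 x)) - β * (∑' x, p x * R x)
          + Real.log Z := by
      calc ∑' x, f x
          = ∑' x, (p x * Real.log (p x / p0 x) - β * (p x * R x)
              + Real.log Z * p x) := tsum_congr hf_eq
        _ = (∑' x, (p x * Real.log (p x / p0 x) - β * (p x * R x)))
              + ∑' x, Real.log Z * p x :=
            Summable.tsum_add (hsum2.sub (hsum1.mul_left β)) (hpsum.mul_left _)
        _ = ((∑' x, p x * Real.log (p x / p0 x)) - ∑' x, β * (p x * R x))
              + Real.log Z * ∑' x, p x := by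
            rw [Summable.tsum_sub hsum2 (hsum1.mul_left β), tsum_mul_left, tsum_mul_left]
        _ = _ := by rw [tsum_mul_left, hptot]; ring
    have hobj : klObjective p p0 R β = Real.log Z / β - (1 / β) * ∑' x, f x := by
      rw [klObjective, hf_tsum]
      field_simp
      ring
    -- Gibbs inequality via g ≥ 0
    set g : X → ℝ := fun x => f x - (p x - pstar x) with hg_def
    have hg_nn : ∀ x, 0 ≤ g x := by
      intro x
      rcases lt_or_eq_of_le (hpnn x) with hx | hx
      · have hp0x : 0 < p0 x := habs x hx
        have hpsx : 0 < pstar x := hps_pos x hp0x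
        have hlog : Real.log (pstar x / p x) ≤ pstar x / p x - 1 :=
          Real.log_le_sub_one_of_pos (div_pos hpsx hx)
        have h1 : Real.log (pstar x / p x) = Real.log (pstar x) - Real.log (p x) :=
          Real.log_div hpsx.ne' hx.ne'
        have h2 : Real.log (p x / pstar x) = Real.log (p x) - Real.log (pstar x) :=
          Real.log_div hx.ne' hpsx.ne'
        simp only [hg_def, hf_def, h2]
        rw [h1] at hlog
        have hd : pstar x / p x * p x = pstar x := div_mul_cancel₀ _ hx.ne'
        nlinarith [mul_le_mul_of_nonneg_right hlog hx.le]
      · simp only [hg_def, hf_def, ← hx]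
        simpa using hps_nn x
    have hg_sum : Summable g := hf_sum.sub (hpsum.sub hps_sum)
    have hg_tsum : ∑' x, g x = ∑' x, f x := by
      simp only [hg_def]
      rw [Summable.tsum_sub hf_sum (hpsum.sub hps_sum), Summable.tsum_sub hpsum hps_sum,
        hptot, hps_tot]
      ring
    have hf_nonneg : 0 ≤ ∑' x, f x := by
      rw [← hg_tsum]; exact tsum_nonneg hg_nn
    refine ⟨hf_sum, hobj, hf_nonneg, ?_⟩
    intro hfz
    have hgz : ∑' x, g x = 0 := by rw [hg_tsum, hfz]
    have hg_all : ∀ x, g x = 0 := by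
      intro x
      have := Summable.le_tsum hg_sum x (fun j _ => hg_nn j)
      exact le_antisymm (hgz ▸ this) (hg_nn x)
    funext x
    rcases lt_or_eq_of_le (hpnn x) with hx | hx
    · have hp0x : 0 < p0 x := habs x hx
      have hpsx : 0 < pstar x := hps_pos x hp0x
      by_contra hne
      have hne' : pstar x / p x ≠ 1 := by
        intro h
        exact hne ((div_eq_one_iff_eq hx.ne').mp h).symm
      have hlog : Real.log (pstar x / p x) < pstar x / p x - 1 :=
        Real.log_lt_sub_one_of_pos (div_pos hpsx hx) hne'
      have h1 : Real.log (pstar x / p x) = Real.log (pstar x) - Real.log (p x) :=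
        Real.log_div hpsx.ne' hx.ne'
      have h2 : Real.log (p x / pstar x) = Real.log (p x) - Real.log (pstar x) :=
        Real.log_div hx.ne' hpsx.ne'
      have hgx := hg_all x
      simp only [hg_def, hf_def, h2] at hgx
      rw [h1] at hlog
      have hd : pstar x / p x * p x = pstar x := div_mul_cancel₀ _ hx.ne'
      nlinarith [mul_lt_mul_of_pos_right hlog hx]
    · have hgx := hg_all x
      simp only [hg_def, hf_def, ← hx] at hgx
      rw [← hx]
      simpa using hgx.symm
  -- pstar satisfies the side conditions
  have hpsR_sum : Summable (fun x => pstar x * R x) := by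
    apply Summable.of_abs
    apply Summable.of_nonneg_of_le (fun x => abs_nonneg _)
      (f := fun x => pstar x * |B|) ?_ (hps_sum.mul_right |B|)
    intro x
    rcases lt_or_eq_of_le (hp0nn x) with hx | hx
    · rw [abs_mul, abs_of_nonneg (hps_nn x)]
      exact mul_le_mul_of_nonneg_left ((hR x hx).trans (le_abs_self B)) (hps_nn x)
    · simp [hps_zero x hx.symm]
  have hpsKL_sum : Summable (fun x => pstar x * Real.log (pstar x / p0 x)) := by
    refine Summable.congr ((hpsR_sum.mul_left β).sub (hps_sum.mul_left (Real.log Z))) ?_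
    intro x
    rcases lt_or_eq_of_le (hp0nn x) with hx | hx
    · have hpsx : 0 < pstar x := hps_pos x hx
      rw [Real.log_div hpsx.ne' hx.ne', hlogps x hx]
      ring
    · simp [hps_zero x hx.symm]
  have hps_pmf : IsPMF pstar := ⟨hps_nn, hps_sum, hps_tot⟩
  obtain ⟨_, hps_obj, _, _⟩ := hmain pstar hps_pmf habs_star hpsR_sum hpsKL_sum
  have hps_f_zero : (∑' x, pstar x * Real.log (pstar x / pstar x)) = 0 := by
    have : ∀ x, pstar x * Real.log (pstar x / pstar x) = 0 := by
      intro x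
      rcases eq_or_lt_of_le (hps_nn x) with hx | hx
      · simp [← hx]
      · rw [div_self hx.ne', Real.log_one, mul_zero]
    simp [tsum_congr this]
  have hps_obj' : klObjective pstar p0 R β = Real.log Z / β := by
    rw [hps_obj, hps_f_zero, mul_zero, sub_zero]
  refine ⟨hps_pmf, habs_star, ?_, ?_⟩
  · intro p hp habs hsum1 hsum2
    obtain ⟨_, hobj, hnn, _⟩ := hmain p hp habs hsum1 hsum2
    rw [hobj, hps_obj']
    have : 0 ≤ (1 / β) * ∑' x, p x * Real.log (p x / pstar x) :=
      mul_nonneg (by positivity) hnn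
    linarith
  · intro p hp habs hsum1 hsum2 heq
    obtain ⟨_, hobj, _, huniq⟩ := hmain p hp habs hsum1 hsum2
    apply huniq
    rw [hobj, hps_obj'] at heq
    have hβ' : (1 / β) ≠ 0 := by positivity
    have : (1 / β) * ∑' x, p x * Real.log (p x / pstar x) = 0 := by linarith
    exact (mul_eq_zero.mp this).resolve_left hβ'
end

section
/- Fix rewards R_1, …, R_N ∈ ℝ that are not all equal, a base temperature λ_{t−1} ≥ 0, and β > 0. Define u_n(λ) = exp((λ − λ_{t−1}) β R_n) and ESS(λ) = (Σ_n u_n(λ))² / (Σ_n u_n(λ)²) for λ ≥ λ_{t−1}. Then ESS(λ_{t−1}) = N and ESS is strictly decreasing in λ on [λ_{t−1}, ∞). -/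
open Finset


lemma double_expand {N : ℕ} (u v : Fin N → ℝ) :
    ∑ n, ∑ m, u n * u m * (u m - u n) * (v m - v n)
      = (∑ n, u n) * (∑ m, u m ^ 2 * v m) - (∑ n, u n ^ 2) * (∑ m, u m * v m)
        - (∑ n, u n * v n) * (∑ m, u m ^ 2) + (∑ n, u n ^ 2 * v n) * (∑ m, u m) := by
  rw [Finset.sum_mul_sum, Finset.sum_mul_sum, Finset.sum_mul_sum, Finset.sum_mul_sum,
    ← Finset.sum_sub_distrib, ← Finset.sum_sub_distrib, ← Finset.sum_add_distrib]
  refine Finset.sum_congr rfl fun n _ => ?_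
  rw [← Finset.sum_sub_distrib, ← Finset.sum_sub_distrib, ← Finset.sum_add_distrib]
  exact Finset.sum_congr rfl fun m _ => by ring

lemma cheb_aux {N : ℕ} (u v : Fin N → ℝ) (hu : ∀ n, 0 < u n)
    (h : ∀ n m, 0 ≤ (u m - u n) * (v m - v n)) :
    (∑ n, u n ^ 2) * (∑ n, u n * v n) ≤ (∑ n, u n) * (∑ n, u n ^ 2 * v n) := by
  have h2 : 0 ≤ ∑ n, ∑ m, u n * u m * (u m - u n) * (v m - v n) := by
    refine Finset.sum_nonneg fun n _ => Finset.sum_nonneg fun m _ => ?_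
    have := h n m
    have := mul_pos (hu n) (hu m)
    nlinarith
  have := double_expand u v
  linarith

lemma cs_expand {N : ℕ} (w v : Fin N → ℝ) :
    ∑ n, ∑ m, w n * w m * (v n - v m) ^ 2
      = (∑ n, w n * v n ^ 2) * (∑ m, w m) - (∑ n, w n * v n) * (∑ m, w m * v m)
        - (∑ n, w n * v n) * (∑ m, w m * v m) + (∑ n, w n) * (∑ m, w m * v m ^ 2) := by
  rw [Finset.sum_mul_sum, Finset.sum_mul_sum, Finset.sum_mul_sum,
    ← Finset.sum_sub_distrib, ← Finset.sum_sub_distrib, ← Finset.sum_add_distrib]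
  refine Finset.sum_congr rfl fun n _ => ?_
  rw [← Finset.sum_sub_distrib, ← Finset.sum_sub_distrib, ← Finset.sum_add_distrib]
  exact Finset.sum_congr rfl fun m _ => by ring

lemma cs_strict {N : ℕ} (w v : Fin N → ℝ) (hw : ∀ n, 0 < w n)
    (n₀ m₀ : Fin N) (hne : v n₀ ≠ v m₀) :
    (∑ n, w n * v n) ^ 2 < (∑ n, w n) * (∑ n, w n * v n ^ 2) := by
  have h2 : 0 < ∑ n, ∑ m, w n * w m * (v n - v m) ^ 2 := by
    refine Finset.sum_pos' (fun n _ => Finset.sum_nonneg fun m _ =>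
        mul_nonneg (mul_nonneg (hw n).le (hw m).le) (sq_nonneg _))
      ⟨n₀, Finset.mem_univ _, ?_⟩
    refine Finset.sum_pos' (fun m _ =>
        mul_nonneg (mul_nonneg (hw n₀).le (hw m).le) (sq_nonneg _))
      ⟨m₀, Finset.mem_univ _, ?_⟩
    have hvne : v n₀ - v m₀ ≠ 0 := sub_ne_zero.2 hne
    exact mul_pos (mul_pos (hw n₀) (hw m₀)) (by positivity)
  have := cs_expand w v
  nlinarith [this, h2]

/-- **ESS of reward-tilted weights is strictly decreasing in the temperature.**
With not-all-equal rewards `R₁, …, R_N`, base temperature `λ₀ ≥ 0`, `β > 0`,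
weights `u_n(λ) = exp((λ − λ₀) β R_n)`, the effective sample size
`ESS(λ) = (∑ u_n)²/(∑ u_n²)` satisfies `ESS(λ₀) = N` and is strictly
decreasing on `[λ₀, ∞)`. -/
theorem ess_strict_anti {N : ℕ} (R : Fin N → ℝ) (lam0 β : ℝ)
    (hlam0 : 0 ≤ lam0) (hβ : 0 < β)
    (hne : ∃ n m, R n ≠ R m) :
    let u : ℝ → Fin N → ℝ := fun lam n => Real.exp ((lam - lam0) * β * R n)
    let ESS : ℝ → ℝ := fun lam => (∑ n, u lam n) ^ 2 / (∑ n, (u lam n) ^ 2)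
    ESS lam0 = N ∧ StrictAntiOn ESS (Set.Ici lam0) := by
  intro u ESS
  obtain ⟨n₀, m₀, hRne⟩ := hne
  have hN : (0:ℝ) < N := by
    have : 0 < N := Nat.pos_of_ne_zero (by rintro rfl; exact n₀.elim0)
    exact_mod_cast this
  constructor
  · show (∑ n, u lam0 n) ^ 2 / (∑ n, (u lam0 n) ^ 2) = N
    have hu0 : ∀ n, u lam0 n = 1 := fun n => by
      show Real.exp ((lam0 - lam0) * β * R n) = 1
      simp
    simp only [hu0, one_pow, Finset.sum_const, Finset.card_univ, Fintype.card_fin,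
      nsmul_eq_mul, mul_one]
    field_simp
  · intro a ha b hb hab
    show (∑ n, u b n) ^ 2 / (∑ n, (u b n) ^ 2)
        < (∑ n, u a n) ^ 2 / (∑ n, (u a n) ^ 2)
    set U : Fin N → ℝ := fun n => Real.exp ((a - lam0) * β * R n) with hU
    set V : Fin N → ℝ := fun n => Real.exp ((b - a) * β * R n) with hV
    have hUpos : ∀ n, 0 < U n := fun n => Real.exp_pos _
    have hVpos : ∀ n, 0 < V n := fun n => Real.exp_pos _
    have hub : ∀ n, u b n = U n * V n := fun n => by
      show Real.exp ((b - lam0) * β * R n) = _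
      rw [hU, hV, ← Real.exp_add]
      ring_nf
    have hua : ∀ n, u a n = U n := fun n => rfl
    -- comonotonicity
    have hmono : ∀ n m, 0 ≤ (U m - U n) * (V m - V n) := by
      intro n m
      have hc : 0 ≤ (a - lam0) * β := mul_nonneg (by linarith [Set.mem_Ici.1 ha]) hβ.le
      have hd : 0 ≤ (b - a) * β := mul_nonneg (by linarith) hβ.le
      rcases le_total (R n) (R m) with h | h
      · have h1 : U n ≤ U m := Real.exp_le_exp.2 (by nlinarith)
        have h2 : V n ≤ V m := Real.exp_le_exp.2 (by nlinarith)
        nlinarith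
      · have h1 : U m ≤ U n := Real.exp_le_exp.2 (by nlinarith)
        have h2 : V m ≤ V n := Real.exp_le_exp.2 (by nlinarith)
        nlinarith
    have hVne : V n₀ ≠ V m₀ := by
      intro h
      apply hRne
      have h2 := Real.exp_injective h
      have hba : (b - a) * β ≠ 0 := (mul_pos (by linarith : (0:ℝ) < b - a) hβ).ne'
      exact mul_left_cancel₀ hba h2
    set A := ∑ n, U n with hA
    set B := ∑ n, U n ^ 2 with hB
    set C := ∑ n, U n * V n with hC
    set D := ∑ n, U n ^ 2 * V n with hD
    set E := ∑ n, U n ^ 2 * V n ^ 2 with hE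
    have hApos : 0 < A := Finset.sum_pos (fun n _ => hUpos n) ⟨n₀, Finset.mem_univ _⟩
    have hBpos : 0 < B := Finset.sum_pos (fun n _ => by positivity) ⟨n₀, Finset.mem_univ _⟩
    have hCpos : 0 < C := Finset.sum_pos (fun n _ => mul_pos (hUpos n) (hVpos n))
      ⟨n₀, Finset.mem_univ _⟩
    have hDpos : 0 < D := Finset.sum_pos (fun n _ => by positivity) ⟨n₀, Finset.mem_univ _⟩
    have hEpos : 0 < E := Finset.sum_pos (fun n _ => by positivity) ⟨n₀, Finset.mem_univ _⟩
    have hcheb : B * C ≤ A * D := cheb_aux U V hUpos hmono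
    have hcs : D ^ 2 < B * E := by
      have := cs_strict (fun n => U n ^ 2) V (fun n => by positivity) n₀ m₀ hVne
      simpa [← hB, ← hD, ← hE] using this
    have hgoal : C ^ 2 * B < A ^ 2 * E := by
      have h3 : (B * C) * (B * C) ≤ (A * D) * (A * D) :=
        mul_le_mul hcheb hcheb (by positivity) (by positivity)
      have h4 : (A * D) * (A * D) < A ^ 2 * (B * E) := by nlinarith [pow_pos hApos 2]
      have h5 : B * (C ^ 2 * B) < B * (A ^ 2 * E) := by nlinarith [h3, h4]
      exact lt_of_mul_lt_mul_left h5 hBpos.le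
    have hsum2 : ∑ n, (u b n) ^ 2 = E := by
      rw [hE]; exact Finset.sum_congr rfl fun n _ => by rw [hub n]; ring
    have hsum1 : ∑ n, u b n = C := by
      rw [hC]; exact Finset.sum_congr rfl fun n _ => hub n
    rw [hsum1, hsum2]
    rw [div_lt_div_iff₀ hEpos hBpos]
    linarith
end

section
/- Let M be a Markov kernel on a countable set X satisfying the Doeblin minorization condition: there exist ε ∈ (0,1] and a probability mass function ν on X such that M(x,y) ≥ ε ν(y) for all x, y. Then M has a unique invariant probability mass function p, and for every starting state x and every K ≥ 1, ‖M^K(x,·) − p‖_TV ≤ (1 − ε)^K. -/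
/-- `K`-fold composition of a Markov kernel on a countable space. -/
noncomputable def kernelPow {X : Type*} [DecidableEq X] (M : X → X → ℝ) : ℕ → X → X → ℝ
  | 0 => fun x y => if y = x then 1 else 0
  | K + 1 => fun x y => ∑' z, M x z * kernelPow M K z y

/-- Total variation distance between pmfs: `(1/2) ∑ₓ |μ x − ν x|`. -/
noncomputable def tvDist {X : Type*} (μ ν : X → ℝ) : ℝ :=
  (1 / 2) * ∑' x, |μ x - ν x|

/-!
The minorization splits `M = ε ν + (1 - ε) R` with `R` again a Markov kernel. The `ν`-part of
`μM` does not depend on the initial law `μ`, so `μ ↦ μM` contracts the total variation distance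
by the factor `1 - ε`. This gives uniqueness of the invariant law and the rate `(1 - ε)^K`,
while existence comes from the explicit invariant law `∑ₖ ε (1 - ε)ᵏ ν Rᵏ`.
-/

section Mixture

variable {ι X : Type*}

/-- For a kernel `N`, `mixture μ N` is the measure `μN`. -/
noncomputable def mixture (w : ι → ℝ) (μ : ι → X → ℝ) (y : X) : ℝ := ∑' i, w i * μ i y

lemma IsPMF.le_one {p : X → ℝ} (hp : IsPMF p) (x : X) : p x ≤ 1 :=
  hp.2.2 ▸ hp.2.1.le_tsum x fun j _ => hp.1 j

lemma IsPMF.eq_of_le {p q : X → ℝ} (hp : IsPMF p) (hq : IsPMF q) (h : ∀ x, q x ≤ p x) :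
    p = q := by
  have hsum : ∑' x, (p x - q x) = 0 := by
    rw [hp.2.1.tsum_sub hq.2.1, hp.2.2, hq.2.2, sub_self]
  funext x
  have hx := (hp.2.1.sub hq.2.1).le_tsum x fun y _ => sub_nonneg.2 (h y)
  linarith [h x]

lemma summable_mul_apply {w : ι → ℝ} {μ : ι → X → ℝ} (hw : Summable w)
    (hμ : ∀ i, IsPMF (μ i)) (y : X) : Summable fun i => w i * μ i y :=
  hw.abs.of_norm_bounded fun i => by
    rw [Real.norm_eq_abs, abs_mul, abs_of_nonneg ((hμ i).1 y)]
    exact mul_le_of_le_one_right (abs_nonneg _) ((hμ i).le_one y)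

lemma summable_prod_mul {w : ι → ℝ} {μ : ι → X → ℝ} (hw0 : ∀ i, 0 ≤ w i) (hw : Summable w)
    (hμ : ∀ i, IsPMF (μ i)) : Summable fun q : ι × X => w q.1 * μ q.1 q.2 := by
  refine (summable_prod_of_nonneg fun q => mul_nonneg (hw0 q.1) ((hμ q.1).1 q.2)).2
    ⟨fun i => (hμ i).2.1.mul_left (w i), ?_⟩
  simpa only [tsum_mul_left, (hμ _).2.2, mul_one] using hw

lemma summable_mixture {w : ι → ℝ} {μ : ι → X → ℝ} (hw0 : ∀ i, 0 ≤ w i) (hw : Summable w)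
    (hμ : ∀ i, IsPMF (μ i)) : Summable (mixture w μ) :=
  (summable_prod_mul hw0 hw hμ).prod_symm.prod

lemma tsum_mixture {w : ι → ℝ} {μ : ι → X → ℝ} (hw0 : ∀ i, 0 ≤ w i) (hw : Summable w)
    (hμ : ∀ i, IsPMF (μ i)) : ∑' y, mixture w μ y = ∑' i, w i := by
  unfold mixture
  rw [Summable.tsum_comm (f := fun i y => w i * μ i y) (summable_prod_mul hw0 hw hμ)]
  simp only [tsum_mul_left, (hμ _).2.2, mul_one]

lemma IsPMF.mixture {w : ι → ℝ} {μ : ι → X → ℝ} (hw : IsPMF w) (hμ : ∀ i, IsPMF (μ i)) :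
    IsPMF (mixture w μ) :=
  ⟨fun y => tsum_nonneg fun i => mul_nonneg (hw.1 i) ((hμ i).1 y),
    summable_mixture hw.1 hw.2.1 hμ, (tsum_mixture hw.1 hw.2.1 hμ).trans hw.2.2⟩

lemma mixture_mixture {w : ι → ℝ} {μ : ι → X → ℝ} {N : X → X → ℝ} (hw : IsPMF w)
    (hμ : ∀ i, IsPMF (μ i)) (hN : ∀ x, IsPMF (N x)) :
    mixture (mixture w μ) N = mixture w fun i => mixture (μ i) N := by
  funext y
  have hsum : Summable fun q : ι × X => w q.1 * (μ q.1 q.2 * N q.2 y) :=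
    (summable_prod_mul hw.1 hw.2.1 hμ).of_nonneg_of_le
      (fun q => mul_nonneg (hw.1 _) (mul_nonneg ((hμ _).1 _) ((hN _).1 y)))
      fun q => by
        rw [← mul_assoc]
        exact mul_le_of_le_one_right (mul_nonneg (hw.1 _) ((hμ _).1 _)) ((hN _).le_one y)
  simp only [mixture, ← tsum_mul_right, ← tsum_mul_left, mul_assoc]
  exact Summable.tsum_comm (f := fun i x => w i * (μ i x * N x y)) hsum

lemma mixture_sub {μ₁ μ₂ : X → ℝ} {N : X → X → ℝ} (h₁ : Summable μ₁) (h₂ : Summable μ₂)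
    (hN : ∀ x, IsPMF (N x)) (y : X) :
    mixture μ₁ N y - mixture μ₂ N y = mixture (μ₁ - μ₂) N y := by
  simp only [mixture, ← Summable.tsum_sub (summable_mul_apply h₁ hN y)
    (summable_mul_apply h₂ hN y), Pi.sub_apply, sub_mul]

lemma tsum_abs_mixture_sub_le {μ₁ μ₂ : X → ℝ} {N : X → X → ℝ} (h₁ : Summable μ₁)
    (h₂ : Summable μ₂) (hN : ∀ x, IsPMF (N x)) :
    ∑' y, |mixture μ₁ N y - mixture μ₂ N y| ≤ ∑' x, |μ₁ x - μ₂ x| := by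
  have hd : Summable fun x => |μ₁ x - μ₂ x| := (h₁.sub h₂).abs
  have hle : ∀ y, |mixture μ₁ N y - mixture μ₂ N y| ≤ mixture (fun x => |μ₁ x - μ₂ x|) N y := by
    intro y
    rw [mixture_sub h₁ h₂ hN]
    refine (norm_tsum_le_tsum_norm (summable_mul_apply (h₁.sub h₂) hN y).norm).trans_eq ?_
    simp only [norm_mul, Real.norm_eq_abs, abs_of_nonneg ((hN _).1 y)]
    rfl
  have hs := summable_mixture (fun x => abs_nonneg (μ₁ x - μ₂ x)) hd hN
  have habs := hs.of_nonneg_of_le (fun y => abs_nonneg _) hle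
  exact (habs.tsum_le_tsum hle hs).trans_eq (tsum_mixture (fun x => abs_nonneg _) hd hN)

end Mixture

section TotalVariation

variable {X : Type*}

lemma tvDist_nonneg (μ₁ μ₂ : X → ℝ) : 0 ≤ tvDist μ₁ μ₂ :=
  mul_nonneg (by norm_num) (tsum_nonneg fun _ => abs_nonneg _)

lemma tvDist_le_one {μ₁ μ₂ : X → ℝ} (h₁ : IsPMF μ₁) (h₂ : IsPMF μ₂) : tvDist μ₁ μ₂ ≤ 1 := by
  have hle : ∀ x, |μ₁ x - μ₂ x| ≤ μ₁ x + μ₂ x := fun x =>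
    abs_sub_le_iff.2 ⟨by linarith [h₂.1 x], by linarith [h₁.1 x]⟩
  have hsum : ∑' x, |μ₁ x - μ₂ x| ≤ 2 := calc
    ∑' x, |μ₁ x - μ₂ x| ≤ ∑' x, (μ₁ x + μ₂ x) :=
      (h₁.2.1.sub h₂.2.1).abs.tsum_le_tsum hle (h₁.2.1.add h₂.2.1)
    _ = 2 := by rw [h₁.2.1.tsum_add h₂.2.1, h₁.2.2, h₂.2.2]; norm_num
  unfold tvDist
  linarith

lemma eq_of_tvDist_eq_zero {μ₁ μ₂ : X → ℝ} (h₁ : Summable μ₁) (h₂ : Summable μ₂)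
    (h : tvDist μ₁ μ₂ = 0) : μ₁ = μ₂ := by
  have hsum : ∑' x, |μ₁ x - μ₂ x| = 0 := by unfold tvDist at h; linarith
  funext x
  have hx := (h₁.sub h₂).abs.le_tsum x fun _ _ => abs_nonneg _
  rw [hsum] at hx
  exact sub_eq_zero.1 (abs_nonpos_iff.1 hx)

end TotalVariation

section KernelPow

variable {X : Type*} [DecidableEq X] {M : X → X → ℝ}

lemma isPMF_kernelPow (hM : ∀ x, IsPMF (M x)) (K : ℕ) (x : X) : IsPMF (kernelPow M K x) := by
  induction K generalizing x with
  | zero =>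
    refine ⟨fun y => ?_, (hasSum_ite_eq x (1 : ℝ)).summable, (hasSum_ite_eq x (1 : ℝ)).tsum_eq⟩
    simp only [kernelPow]
    split_ifs <;> norm_num
  | succ K ih => exact (hM x).mixture ih

lemma kernelPow_succ' (hM : ∀ x, IsPMF (M x)) (K : ℕ) (x : X) :
    kernelPow M (K + 1) x = mixture (kernelPow M K x) M := by
  induction K generalizing x with
  | zero =>
    funext y
    simp [kernelPow, mixture]
  | succ K ih =>
    calc kernelPow M (K + 2) x = mixture (M x) fun z => mixture (kernelPow M K z) M :=
          funext fun y => congrArg tsum (funext fun z => by rw [ih z])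
      _ = mixture (kernelPow M (K + 1) x) M :=
          (mixture_mixture (hM x) (isPMF_kernelPow hM K) hM).symm

end KernelPow

section Contraction

variable {X : Type*} {M : X → X → ℝ} {c : ℝ}
  (hcontr : ∀ μ₁ μ₂, IsPMF μ₁ → IsPMF μ₂ → tvDist (mixture μ₁ M) (mixture μ₂ M) ≤ c * tvDist μ₁ μ₂)
include hcontr

lemma eq_of_mixture_eq_self_of_contract (hc : c < 1) {p q : X → ℝ} (hp : IsPMF p)
    (hq : IsPMF q) (hpM : mixture p M = p) (hqM : mixture q M = q) : q = p := by
  have h := hcontr q p hq hp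
  rw [hpM, hqM] at h
  have hnonneg := tvDist_nonneg q p
  exact eq_of_tvDist_eq_zero hq.2.1 hp.2.1 (by nlinarith)

lemma tvDist_kernelPow_le [DecidableEq X] (hM : ∀ x, IsPMF (M x)) (hc : 0 ≤ c) {p : X → ℝ}
    (hp : IsPMF p) (hpM : mixture p M = p) (x : X) (K : ℕ) :
    tvDist (kernelPow M K x) p ≤ c ^ K := by
  induction K with
  | zero => simpa using tvDist_le_one (isPMF_kernelPow hM 0 x) hp
  | succ K ih =>
    calc tvDist (kernelPow M (K + 1) x) p
        = tvDist (mixture (kernelPow M K x) M) (mixture p M) := by rw [kernelPow_succ' hM, hpM]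
      _ ≤ c * tvDist (kernelPow M K x) p := hcontr _ _ (isPMF_kernelPow hM K x) hp
      _ ≤ c ^ (K + 1) := by rw [pow_succ']; exact mul_le_mul_of_nonneg_left ih hc

end Contraction

section Doeblin

variable {X : Type*} {M R : X → X → ℝ} {ν : X → ℝ} {ε : ℝ}

lemma exists_doeblin_split (hM : ∀ x, IsPMF (M x)) (hν : IsPMF ν) (hε1 : ε ≤ 1)
    (hdoeblin : ∀ x y, ε * ν y ≤ M x y) :
    ∃ R : X → X → ℝ, (∀ x, IsPMF (R x)) ∧ ∀ x y, M x y = ε * ν y + (1 - ε) * R x y := by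
  rcases hε1.lt_or_eq with hε1 | rfl
  · have hε : 0 < 1 - ε := sub_pos.2 hε1
    refine ⟨fun x y => (M x y - ε * ν y) / (1 - ε), fun x => ⟨fun y => ?_, ?_, ?_⟩,
      fun x y => by field_simp; ring⟩
    · exact div_nonneg (sub_nonneg.2 (hdoeblin x y)) hε.le
    · exact ((hM x).2.1.sub (hν.2.1.mul_left ε)).div_const _
    · rw [tsum_div_const, (hM x).2.1.tsum_sub (hν.2.1.mul_left ε), (hM x).2.2, tsum_mul_left,
        hν.2.2, mul_one, div_self hε.ne']
  · refine ⟨fun _ => ν, fun _ => hν, fun x y => ?_⟩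
    rw [(hM x).eq_of_le hν fun y => by simpa using hdoeblin x y]
    ring

variable (hR : ∀ x, IsPMF (R x)) (hsplit : ∀ x y, M x y = ε * ν y + (1 - ε) * R x y)
include hR hsplit

lemma mixture_of_split {μ : X → ℝ} (hμ : IsPMF μ) (y : X) :
    mixture μ M y = ε * ν y + (1 - ε) * mixture μ R y := by
  calc mixture μ M y = ∑' x, (μ x * (ε * ν y) + (1 - ε) * (μ x * R x y)) :=
        tsum_congr fun x => by rw [hsplit]; ring
    _ = ε * ν y + (1 - ε) * mixture μ R y := by
        rw [(hμ.2.1.mul_right _).tsum_add ((summable_mul_apply hμ.2.1 hR y).mul_left _),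
          tsum_mul_right, hμ.2.2, one_mul, tsum_mul_left]
        rfl

lemma tvDist_mixture_le_of_split (hε1 : ε ≤ 1) {μ₁ μ₂ : X → ℝ} (h₁ : IsPMF μ₁) (h₂ : IsPMF μ₂) :
    tvDist (mixture μ₁ M) (mixture μ₂ M) ≤ (1 - ε) * tvDist μ₁ μ₂ := by
  have hε : 0 ≤ 1 - ε := sub_nonneg.2 hε1
  have hdiff : ∀ y, |mixture μ₁ M y - mixture μ₂ M y| =
      (1 - ε) * |mixture μ₁ R y - mixture μ₂ R y| := fun y => by
    rw [mixture_of_split hR hsplit h₁, mixture_of_split hR hsplit h₂, add_sub_add_left_eq_sub,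
      ← mul_sub, abs_mul, abs_of_nonneg hε]
  have hR_contract := tsum_abs_mixture_sub_le h₁.2.1 h₂.2.1 hR
  unfold tvDist
  rw [tsum_congr hdiff, tsum_mul_left]
  nlinarith

end Doeblin

section Invariant

variable {X : Type*} {M R : X → X → ℝ} {ν : X → ℝ} {ε : ℝ}

lemma isPMF_geometric (hε0 : 0 < ε) (hε1 : ε ≤ 1) : IsPMF fun k : ℕ => ε * (1 - ε) ^ k := by
  have h0 : 0 ≤ 1 - ε := sub_nonneg.2 hε1
  have h1 : 1 - ε < 1 := sub_lt_self 1 hε0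
  refine ⟨fun k => mul_nonneg hε0.le (pow_nonneg h0 k),
    (summable_geometric_of_lt_one h0 h1).mul_left ε, ?_⟩
  rw [tsum_mul_left, tsum_geometric_of_lt_one h0 h1, sub_sub_cancel, mul_inv_cancel₀ hε0.ne']

/-- Under the split `M = ε ν + (1 - ε) R`, the `M`-chain restarts from `ν` at each step with
probability `ε`; its stationary law is `ν R^G` with `G` geometric of parameter `ε`. -/
noncomputable def doeblinInvariant (ε : ℝ) (ν : X → ℝ) (R : X → X → ℝ) : X → ℝ :=
  mixture (fun k : ℕ => ε * (1 - ε) ^ k) fun k => (fun μ => mixture μ R)^[k] ν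

lemma isPMF_iterate_mixture (hν : IsPMF ν) (hR : ∀ x, IsPMF (R x)) (k : ℕ) :
    IsPMF ((fun μ => mixture μ R)^[k] ν) := by
  induction k with
  | zero => exact hν
  | succ k ih => rw [Function.iterate_succ_apply']; exact ih.mixture hR

lemma isPMF_doeblinInvariant (hν : IsPMF ν) (hR : ∀ x, IsPMF (R x)) (hε0 : 0 < ε)
    (hε1 : ε ≤ 1) : IsPMF (doeblinInvariant ε ν R) :=
  (isPMF_geometric hε0 hε1).mixture (isPMF_iterate_mixture hν hR)

lemma mixture_doeblinInvariant (hν : IsPMF ν) (hR : ∀ x, IsPMF (R x))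
    (hsplit : ∀ x y, M x y = ε * ν y + (1 - ε) * R x y) (hε0 : 0 < ε) (hε1 : ε ≤ 1) :
    mixture (doeblinInvariant ε ν R) M = doeblinInvariant ε ν R := by
  set νR : ℕ → X → ℝ := fun k => (fun μ => mixture μ R)^[k] ν
  have hνR := isPMF_iterate_mixture hν hR
  have hgeom := isPMF_geometric hε0 hε1
  have hstep : mixture (doeblinInvariant ε ν R) R = mixture (fun k : ℕ => ε * (1 - ε) ^ k)
      fun k => νR (k + 1) := by
    rw [doeblinInvariant, mixture_mixture hgeom hνR hR]
    simp only [νR, Function.iterate_succ_apply']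
  funext y
  rw [mixture_of_split hR hsplit (isPMF_doeblinInvariant hν hR hε0 hε1), hstep]
  calc ε * ν y + (1 - ε) * mixture (fun k : ℕ => ε * (1 - ε) ^ k) (fun k => νR (k + 1)) y
      = ε * (1 - ε) ^ 0 * νR 0 y + ∑' k : ℕ, ε * (1 - ε) ^ (k + 1) * νR (k + 1) y := by
        rw [mixture, ← tsum_mul_left]
        simp only [νR, Function.iterate_zero_apply, pow_zero, mul_one, pow_succ]
        congr 1
        exact tsum_congr fun k => by ring
    _ = doeblinInvariant ε ν R y := (summable_mul_apply hgeom.2.1 hνR y).tsum_eq_zero_add.symm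

end Invariant

theorem doeblin_uniform_ergodicity_general
    {X : Type*} [DecidableEq X]
    (M : X → X → ℝ) (ν : X → ℝ) (ε : ℝ)
    (hM : ∀ x, IsPMF (M x)) (hν : IsPMF ν)
    (hε0 : 0 < ε) (hε1 : ε ≤ 1)
    (hdoeblin : ∀ x y, ε * ν y ≤ M x y) :
    ∃ p : X → ℝ, IsPMF p ∧ (∀ y, ∑' x, p x * M x y = p y) ∧
      (∀ q : X → ℝ, IsPMF q → (∀ y, ∑' x, q x * M x y = q y) → q = p) ∧
      (∀ x, ∀ K : ℕ, 1 ≤ K → tvDist (kernelPow M K x) p ≤ (1 - ε) ^ K) := by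
  obtain ⟨R, hR, hsplit⟩ := exists_doeblin_split hM hν hε1 hdoeblin
  have hp := isPMF_doeblinInvariant hν hR hε0 hε1
  have hpM := mixture_doeblinInvariant hν hR hsplit hε0 hε1
  have hcontr := fun μ₁ μ₂ (h₁ : IsPMF μ₁) (h₂ : IsPMF μ₂) =>
    tvDist_mixture_le_of_split hR hsplit hε1 h₁ h₂
  refine ⟨doeblinInvariant ε ν R, hp, congrFun hpM, fun q hq hqM => ?_, fun x K _ => ?_⟩
  · exact eq_of_mixture_eq_self_of_contract hcontr (sub_lt_self 1 hε0) hp hq hpM (funext hqM)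
  · exact tvDist_kernelPow_le hcontr hM (sub_nonneg.2 hε1) hp hpM x K

/-- **Doeblin uniform-ergodicity theorem.** If a Markov kernel `M` on a
countable space satisfies the minorization `M x y ≥ ε ν y` for all `x, y`,
for some `ε ∈ (0,1]` and pmf `ν`, then `M` has a unique invariant pmf `p`,
and `‖M^K(x,·) − p‖_TV ≤ (1 − ε)^K` for every `x` and `K ≥ 1`. -/
theorem doeblin_uniform_ergodicity
    {X : Type*} [Countable X] [DecidableEq X]
    (M : X → X → ℝ) (ν : X → ℝ) (ε : ℝ)
    (hM : ∀ x, IsPMF (M x)) (hν : IsPMF ν)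
    (hε0 : 0 < ε) (hε1 : ε ≤ 1)
    (hdoeblin : ∀ x y, ε * ν y ≤ M x y) :
    ∃ p : X → ℝ, IsPMF p ∧ (∀ y, ∑' x, p x * M x y = p y) ∧
      (∀ q : X → ℝ, IsPMF q → (∀ y, ∑' x, q x * M x y = q y) → q = p) ∧
      (∀ x, ∀ K : ℕ, 1 ≤ K → tvDist (kernelPow M K x) p ≤ (1 - ε) ^ K) :=
  doeblin_uniform_ergodicity_general M ν ε hM hν hε0 hε1 hdoeblin
end
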